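/- Support functions of zonoids of revolution: if μ is an even zonal measure on S^{n-1} with pole ē and Z^μ(v) denotes the rotated zonoid with axis v, defined by h(Z^μ(v),u) = ∫_{S^{n-1}} |u · θ_v w| dμ(w) for any rotation θ_v with θ_v ē = v, then h(Z^μ(v),u) = h(Z^μ(u),v) for all unit vectors u, v. -/

import Mathlib

open MeasureTheory Matrix
open scoped RealInnerProductSpace

/-- The rotation group `SO(n)`, as a subtype of `Fin n → Fin n → ℝ`. -/
def SOn (n : ℕ) : Type :=
  {A : Fin n → Fin n → ℝ // Matrix.of A ∈ Matrix.specialOrthogonalGroup (Fin n) ℝ}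

instance (n : ℕ) : MeasurableSpace (SOn n) := by unfold SOn; infer_instance

/-- The action of a rotation on `ℝⁿ`. -/
noncomputable def rot {n : ℕ} (A : SOn n) (u : EuclideanSpace ℝ (Fin n)) :
    EuclideanSpace ℝ (Fin n) := WithLp.toLp 2 (Matrix.of A.1 *ᵥ u)

variable {n : ℕ}

lemma euc_inner_eq_dot (x y : EuclideanSpace ℝ (Fin n)) : ⟪x, y⟫ = x ⬝ᵥ y := by
  simp only [PiLp.inner_apply, RCLike.inner_apply, conj_trivial, dotProduct]
  exact Finset.sum_congr rfl fun i _ => mul_comm _ _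

lemma inner_mulVec (A : Matrix (Fin n) (Fin n) ℝ) (x y : EuclideanSpace ℝ (Fin n)) :
    ⟪x, (WithLp.toLp 2 (A *ᵥ y) : EuclideanSpace ℝ (Fin n))⟫
      = ⟪(WithLp.toLp 2 (Aᵀ *ᵥ x) : EuclideanSpace ℝ (Fin n)), y⟫ := by
  rw [euc_inner_eq_dot, euc_inner_eq_dot]
  simp only [WithLp.ofLp_toLp]
  rw [Matrix.dotProduct_mulVec, Matrix.mulVec_transpose]

noncomputable def matOf (f : EuclideanSpace ℝ (Fin n) ≃ₗᵢ[ℝ] EuclideanSpace ℝ (Fin n)) :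
    Matrix (Fin n) (Fin n) ℝ :=
  LinearMap.toMatrix (EuclideanSpace.basisFun (Fin n) ℝ).toBasis
    (EuclideanSpace.basisFun (Fin n) ℝ).toBasis f.toLinearEquiv

lemma matOf_mulVec (f : EuclideanSpace ℝ (Fin n) ≃ₗᵢ[ℝ] EuclideanSpace ℝ (Fin n))
    (x : EuclideanSpace ℝ (Fin n)) :
    (WithLp.toLp 2 (matOf f *ᵥ x) : EuclideanSpace ℝ (Fin n)) = f x := by
  have h : Matrix.toEuclideanLin (matOf f) = (f.toLinearEquiv : _ →ₗ[ℝ] _) := by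
    rw [Matrix.toEuclideanLin_eq_toLin_orthonormal, matOf, Matrix.toLin_toMatrix]
  have := congrArg (fun g => g x) h
  simpa [Matrix.toEuclideanLin_apply] using this

lemma matOf_apply (f : EuclideanSpace ℝ (Fin n) ≃ₗᵢ[ℝ] EuclideanSpace ℝ (Fin n)) (i j : Fin n) :
    matOf f i j = f (EuclideanSpace.single j 1) i := by
  rw [matOf, LinearMap.toMatrix_apply, OrthonormalBasis.coe_toBasis_repr_apply,
    OrthonormalBasis.coe_toBasis, EuclideanSpace.basisFun_apply, EuclideanSpace.basisFun_repr]
  rfl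

lemma matOf_orth (f : EuclideanSpace ℝ (Fin n) ≃ₗᵢ[ℝ] EuclideanSpace ℝ (Fin n)) :
    star (matOf f) * matOf f = 1 := by
  ext i j
  have h3 : ⟪f (EuclideanSpace.single i 1), f (EuclideanSpace.single j 1)⟫
      = ⟪(EuclideanSpace.single i 1 : EuclideanSpace ℝ (Fin n)), EuclideanSpace.single j 1⟫ :=
    f.inner_map_map _ _
  simp only [PiLp.inner_apply, RCLike.inner_apply, conj_trivial] at h3
  rw [Matrix.mul_apply, Matrix.one_apply]
  calc ∑ k, (star (matOf f)) i k * matOf f k j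
      = ∑ k, f (EuclideanSpace.single i 1) k * f (EuclideanSpace.single j 1) k := by
        refine Finset.sum_congr rfl fun k _ => ?_
        simp [Matrix.star_apply, matOf_apply]
    _ = ∑ k, (EuclideanSpace.single i 1 : EuclideanSpace ℝ (Fin n)) k
          * (EuclideanSpace.single j 1 : EuclideanSpace ℝ (Fin n)) k := by
          simpa only [mul_comm] using h3
    _ = if i = j then 1 else 0 := by
        simp [EuclideanSpace.single_apply, Finset.sum_ite_eq, eq_comm]

lemma matOf_det_pm (f : EuclideanSpace ℝ (Fin n) ≃ₗᵢ[ℝ] EuclideanSpace ℝ (Fin n)) :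
    (matOf f).det = 1 ∨ (matOf f).det = -1 := by
  have h := congrArg Matrix.det (matOf_orth f)
  rw [Matrix.det_mul, Matrix.det_one, Matrix.star_eq_conjTranspose, Matrix.det_conjTranspose,
    star_trivial] at h
  exact mul_self_eq_one_iff.mp h

lemma matOf_det_eq (f : EuclideanSpace ℝ (Fin n) ≃ₗᵢ[ℝ] EuclideanSpace ℝ (Fin n)) :
    (matOf f).det = LinearMap.det (f.toLinearEquiv : EuclideanSpace ℝ (Fin n) →ₗ[ℝ] _) :=
  LinearMap.det_toMatrix _ _

lemma exists_SOn (f : EuclideanSpace ℝ (Fin n) ≃ₗᵢ[ℝ] EuclideanSpace ℝ (Fin n))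
    (hdet : (matOf f).det = 1) : ∃ ρ : SOn n, ∀ x, rot ρ x = f x := by
  refine ⟨⟨matOf f, Matrix.mem_specialOrthogonalGroup_iff.mpr
    ⟨(Matrix.mem_orthogonalGroup_iff' (Fin n) ℝ).mpr ?_, hdet⟩⟩, fun x => matOf_mulVec f x⟩
  exact matOf_orth f

lemma det_eq_basis_det (f : EuclideanSpace ℝ (Fin n) ≃ₗᵢ[ℝ] EuclideanSpace ℝ (Fin n))
    (C : OrthonormalBasis (Fin n) ℝ (EuclideanSpace ℝ (Fin n))) :
    LinearMap.det (f.toLinearEquiv : EuclideanSpace ℝ (Fin n) →ₗ[ℝ] _)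
      = C.toBasis.det (fun j => f (C j)) := by
  rw [← LinearMap.det_toMatrix C.toBasis, Module.Basis.det_apply]
  congr 1
  ext i j
  rw [LinearMap.toMatrix_apply, Module.Basis.toMatrix_apply, OrthonormalBasis.coe_toBasis]
  rfl

lemma trans_repr_apply (B C : OrthonormalBasis (Fin n) ℝ (EuclideanSpace ℝ (Fin n))) (i : Fin n) :
    (C.repr.trans B.repr.symm) (C i) = B i := by
  simp [LinearIsometryEquiv.trans_apply, OrthonormalBasis.repr_self,
    OrthonormalBasis.repr_symm_single]

lemma det_matOf_trans (B C : OrthonormalBasis (Fin n) ℝ (EuclideanSpace ℝ (Fin n))) :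
    (matOf (C.repr.trans B.repr.symm)).det = C.toBasis.det ⇑B := by
  rw [matOf_det_eq, det_eq_basis_det _ C]
  congr 1
  funext j
  exact trans_repr_apply B C j

lemma exists_ONB_pair (hn : 3 ≤ n) (e₀ x : EuclideanSpace ℝ (Fin n)) (he₀ : ‖e₀‖ = 1)
    (hx : ‖x‖ = 1) (hex : ⟪e₀, x⟫ = 0) :
    ∃ B : OrthonormalBasis (Fin n) ℝ (EuclideanSpace ℝ (Fin n)),
      B ⟨0, by omega⟩ = e₀ ∧ B ⟨1, by omega⟩ = x := by
  set i0 : Fin n := ⟨0, by omega⟩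
  set i1 : Fin n := ⟨1, by omega⟩
  have h01 : i0 ≠ i1 := by simp [i0, i1, Fin.ext_iff]
  set v : Fin n → EuclideanSpace ℝ (Fin n) := fun i => if i = i0 then e₀ else x with hv
  have horth : Orthonormal ℝ (Set.restrict {i0, i1} v) := by
    rw [orthonormal_iff_ite]
    rintro ⟨i, hi⟩ ⟨j, hj⟩
    simp only [Set.mem_insert_iff, Set.mem_singleton_iff] at hi hj
    have hex2 : ⟪x, e₀⟫ = (0:ℝ) := by rw [real_inner_comm]; exact hex
    have hinner : ∀ y z : EuclideanSpace ℝ (Fin n), ‖y‖ = 1 → ⟪y, y⟫ = (1:ℝ) := by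
      intro y z hy
      rw [real_inner_self_eq_norm_mul_norm, hy, one_mul]
    rcases hi with rfl | rfl <;> rcases hj with rfl | rfl <;>
      simp [Set.restrict, v, h01, h01.symm, Subtype.ext_iff, hinner e₀ e₀ he₀,
        hinner x x hx, hex, hex2, he₀, hx]
  obtain ⟨B, hB⟩ := horth.exists_orthonormalBasis_extension_of_card_eq (by simp)
  refine ⟨B, ?_, ?_⟩
  · have := hB i0 (by simp)
    simpa [v] using this
  · have := hB i1 (by simp)
    simpa [v, h01.symm] using this

lemma exists_rotation (hn : 3 ≤ n) (e₀ a b : EuclideanSpace ℝ (Fin n))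
    (he₀ : ‖e₀‖ = 1) (ha : ‖a‖ = 1) (hb : ‖b‖ = 1) (hab : ⟪a, e₀⟫ = ⟪b, e₀⟫) :
    ∃ ρ : SOn n, rot ρ e₀ = e₀ ∧ rot ρ b = a := by
  set t : ℝ := ⟪a, e₀⟫ with ht
  have hbe : ⟪b, e₀⟫ = t := hab.symm
  have hsq : ∀ c : EuclideanSpace ℝ (Fin n), ‖c‖ = 1 → ⟪c, e₀⟫ = t →
      ‖c - t • e₀‖ ^ 2 = 1 - t ^ 2 := by
    intro c hc hce
    rw [norm_sub_sq_real, real_inner_smul_right, hce, norm_smul, hc, he₀, Real.norm_eq_abs,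
      mul_one, sq_abs]
    ring
  by_cases h0 : a - t • e₀ = 0
  · have hae : a = t • e₀ := by rwa [sub_eq_zero] at h0
    have ht2 : t ^ 2 = 1 := by
      have h1 := hsq a ha rfl
      rw [h0] at h1
      simp only [norm_zero] at h1
      nlinarith
    have hb0 : b = t • e₀ := by
      have h2 := hsq b hb hbe
      rw [ht2, sub_self, pow_eq_zero_iff (by norm_num : 2 ≠ 0), norm_eq_zero,
        sub_eq_zero] at h2
      exact h2
    have hba : b = a := by rw [hae, hb0]
    refine ⟨⟨(1 : Matrix (Fin n) (Fin n) ℝ), one_mem _⟩, ?_, ?_⟩ <;>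
      · show (WithLp.toLp 2 ((1 : Matrix (Fin n) (Fin n) ℝ) *ᵥ _) : EuclideanSpace ℝ (Fin n)) = _
        simp [Matrix.one_mulVec, hba]
  · set r : ℝ := ‖a - t • e₀‖ with hrdef
    have hr : r ≠ 0 := fun h => h0 (norm_eq_zero.mp h)
    have hrpos : 0 < r := lt_of_le_of_ne (norm_nonneg _) (Ne.symm hr)
    have hr2 : r ^ 2 = 1 - t ^ 2 := hsq a ha rfl
    have hrb : ‖b - t • e₀‖ = r := by
      have h2 := hsq b hb hbe
      have hnn := norm_nonneg (b - t • e₀)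
      nlinarith
    set a' : EuclideanSpace ℝ (Fin n) := r⁻¹ • (a - t • e₀) with ha'def
    set b' : EuclideanSpace ℝ (Fin n) := r⁻¹ • (b - t • e₀) with hb'def
    have hna' : ‖a'‖ = 1 := by
      rw [ha'def, norm_smul, Real.norm_eq_abs, abs_of_pos (inv_pos.mpr hrpos), ← hrdef,
        inv_mul_cancel₀ hr]
    have hnb' : ‖b'‖ = 1 := by
      rw [hb'def, norm_smul, Real.norm_eq_abs, abs_of_pos (inv_pos.mpr hrpos), hrb,
        inv_mul_cancel₀ hr]
    have hee : ⟪e₀, e₀⟫ = (1:ℝ) := by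
      rw [real_inner_self_eq_norm_mul_norm, he₀]; norm_num
    have hea' : ⟪e₀, a'⟫ = 0 := by
      rw [ha'def, real_inner_smul_right, inner_sub_right, real_inner_smul_right, hee,
        real_inner_comm a e₀, ← ht]
      ring
    have heb' : ⟪e₀, b'⟫ = 0 := by
      rw [hb'def, real_inner_smul_right, inner_sub_right, real_inner_smul_right, hee,
        real_inner_comm b e₀, hbe]
      ring
    have hadec : a = t • e₀ + r • a' := by
      rw [ha'def, smul_smul, mul_inv_cancel₀ hr, one_smul]
      abel
    have hbdec : b = t • e₀ + r • b' := by
      rw [hb'def, smul_smul, mul_inv_cancel₀ hr, one_smul]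
      abel
    obtain ⟨B, hB0, hB1⟩ := exists_ONB_pair hn e₀ a' he₀ hna' hea'
    obtain ⟨C, hC0, hC1⟩ := exists_ONB_pair hn e₀ b' he₀ hnb' heb'
    have finish : ∀ D : OrthonormalBasis (Fin n) ℝ (EuclideanSpace ℝ (Fin n)),
        D ⟨0, by omega⟩ = e₀ → D ⟨1, by omega⟩ = a' →
        (matOf (C.repr.trans D.repr.symm)).det = 1 →
        ∃ ρ : SOn n, rot ρ e₀ = e₀ ∧ rot ρ b = a := by
      intro D hD0 hD1 hdet
      obtain ⟨ρ, hρ⟩ := exists_SOn _ hdet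
      have hfe : (C.repr.trans D.repr.symm) e₀ = e₀ := by
        conv_lhs => rw [← hC0]
        rw [trans_repr_apply, hD0]
      have hfb' : (C.repr.trans D.repr.symm) b' = a' := by
        conv_lhs => rw [← hC1]
        rw [trans_repr_apply, hD1]
      have hfb : (C.repr.trans D.repr.symm) b = a := by
        rw [hbdec, map_add, LinearIsometryEquiv.map_smul, LinearIsometryEquiv.map_smul, hfe,
          hfb']
        exact hadec.symm
      exact ⟨ρ, by rw [hρ, hfe], by rw [hρ, hfb]⟩
    rcases matOf_det_pm (C.repr.trans B.repr.symm) with hd | hd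
    · exact finish B hB0 hB1 hd
    · rw [det_matOf_trans B C] at hd
      set i2 : Fin n := ⟨2, by omega⟩ with hi2def
      set ε : Fin n → ℝˣ := fun i => if i = i2 then -1 else 1 with hε
      have hBb : ∀ i, (B.toBasis.unitsSMul ε) i = (ε i : ℝ) • B i := by
        intro i
        rw [Module.Basis.unitsSMul_apply, Units.smul_def, OrthonormalBasis.coe_toBasis]
      have honb : Orthonormal ℝ ⇑(B.toBasis.unitsSMul ε) := by
        rw [orthonormal_iff_ite]
        intro i j
        rw [hBb, hBb, real_inner_smul_left, real_inner_smul_right,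
          orthonormal_iff_ite.mp B.orthonormal i j]
        by_cases hij : i = j
        · subst hij
          by_cases hi : i = i2 <;> simp [ε, hi]
        · simp [hij]
      set B' := (B.toBasis.unitsSMul ε).toOrthonormalBasis honb with hB'def
      have hB'app : ∀ i, B' i = (ε i : ℝ) • B i := by
        intro i
        rw [hB'def, Module.Basis.coe_toOrthonormalBasis, hBb]
      have h02 : (⟨0, by omega⟩ : Fin n) ≠ i2 := by simp [hi2def, Fin.ext_iff]
      have h12 : (⟨1, by omega⟩ : Fin n) ≠ i2 := by simp [hi2def, Fin.ext_iff]
      have hB'0 : B' ⟨0, by omega⟩ = e₀ := by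
        rw [hB'app, ← hB0]
        simp [ε, h02]
      have hB'1 : B' ⟨1, by omega⟩ = a' := by
        rw [hB'app, ← hB1]
        simp [ε, h12]
      have hupd : ⇑B' = Function.update ⇑B i2 (-(B i2)) := by
        funext i
        by_cases hi : i = i2
        · subst hi
          rw [hB'app, Function.update_self]
          simp [ε]
        · rw [hB'app, Function.update_of_ne hi]
          simp [ε, hi]
      have hdet' : (matOf (C.repr.trans B'.repr.symm)).det = 1 := by
        rw [det_matOf_trans, hupd, (C.toBasis.det).map_update_neg, Function.update_eq_self,
          hd]
        norm_num
      exact finish B' hB'0 hB'1 hdet'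

lemma SOn_orth (ρ : SOn n) : Matrix.of ρ.1 * (Matrix.of ρ.1)ᵀ = 1 ∧
    (Matrix.of ρ.1)ᵀ * Matrix.of ρ.1 = 1 := by
  have h := (Matrix.mem_specialOrthogonalGroup_iff.mp ρ.2).1
  have hstar : star (Matrix.of ρ.1) = (Matrix.of ρ.1)ᵀ := by
    ext i j
    simp [Matrix.star_apply]
  have h2 := (Matrix.mem_specialOrthogonalGroup_iff.mp ρ.2).1
  rw [Matrix.mem_orthogonalGroup_iff (Fin n) ℝ] at h
  rw [Matrix.mem_orthogonalGroup_iff' (Fin n) ℝ] at h2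
  exact ⟨h, h2⟩

lemma rot_measurable (ρ : SOn n) : Measurable (rot ρ) := by
  have h : rot ρ = ⇑(Matrix.toEuclideanLin (Matrix.of ρ.1)) := by
    funext x
    rw [Matrix.toEuclideanLin_apply]
    rfl
  rw [h]
  exact (LinearMap.continuous_of_finiteDimensional _).measurable

/-- Symmetry of the support functions of zonoids of revolution: if `μ` is an even measure on
the sphere invariant under the stabilizer of the pole `e₀`, `Z^μ(v)` is the rotated zonoid with
axis `v`, with `h(Z^μ(v),u) = ∫ |u · θ_v w| dμ(w)` for any rotation `θ_v` with `θ_v e₀ = v`,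
then `h(Z^μ(v),u) = h(Z^μ(u),v)` for all unit vectors `u, v`. -/
theorem stmt_11 (n : ℕ) (hn : 3 ≤ n) (e₀ : EuclideanSpace ℝ (Fin n)) (he₀ : ‖e₀‖ = 1)
    (μ : Measure (EuclideanSpace ℝ (Fin n))) [IsFiniteMeasure μ]
    (hsupp : μ (Metric.sphere (0 : EuclideanSpace ℝ (Fin n)) 1)ᶜ = 0)
    (hzonal : ∀ ρ : SOn n, rot ρ e₀ = e₀ → μ.map (rot ρ) = μ)
    (heven : μ.map (fun x => -x) = μ)
    (u v : EuclideanSpace ℝ (Fin n)) (hu : ‖u‖ = 1) (hv : ‖v‖ = 1)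
    (θu θv : SOn n) (hθu : rot θu e₀ = u) (hθv : rot θv e₀ = v) :
    ∫ w, |⟪u, rot θv w⟫| ∂μ = ∫ w, |⟪v, rot θu w⟫| ∂μ := by
  set A : Matrix (Fin n) (Fin n) ℝ := Matrix.of θv.1 with hA
  set Bm : Matrix (Fin n) (Fin n) ℝ := Matrix.of θu.1 with hBm
  set a : EuclideanSpace ℝ (Fin n) := (WithLp.toLp 2 (Aᵀ *ᵥ u) : EuclideanSpace ℝ (Fin n)) with ha'
  set b : EuclideanSpace ℝ (Fin n) := (WithLp.toLp 2 (Bmᵀ *ᵥ v) : EuclideanSpace ℝ (Fin n)) with hb'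
  have hAo := SOn_orth θv
  have hBo := SOn_orth θu
  have hAa : (WithLp.toLp 2 (A *ᵥ a) : EuclideanSpace ℝ (Fin n)) = u := by
    show (WithLp.toLp 2 (A *ᵥ (Aᵀ *ᵥ u)) : EuclideanSpace ℝ (Fin n)) = u
    rw [Matrix.mulVec_mulVec, hAo.1, Matrix.one_mulVec, WithLp.toLp_ofLp]
  have hBb : (WithLp.toLp 2 (Bm *ᵥ b) : EuclideanSpace ℝ (Fin n)) = v := by
    show (WithLp.toLp 2 (Bm *ᵥ (Bmᵀ *ᵥ v)) : EuclideanSpace ℝ (Fin n)) = v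
    rw [Matrix.mulVec_mulVec, hBo.1, Matrix.one_mulVec, WithLp.toLp_ofLp]
  have hAe : (WithLp.toLp 2 (A *ᵥ e₀) : EuclideanSpace ℝ (Fin n)) = v := hθv
  have hBe : (WithLp.toLp 2 (Bm *ᵥ e₀) : EuclideanSpace ℝ (Fin n)) = u := hθu
  have hna : ‖a‖ = 1 := by
    have h1 : ⟪a, a⟫ = (1:ℝ) := by
      conv_lhs => rw [ha']
      rw [← inner_mulVec A u a, hAa, real_inner_self_eq_norm_mul_norm, hu]
      norm_num
    rw [real_inner_self_eq_norm_mul_norm] at h1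
    nlinarith [norm_nonneg a]
  have hnb : ‖b‖ = 1 := by
    have h1 : ⟪b, b⟫ = (1:ℝ) := by
      conv_lhs => rw [hb']
      rw [← inner_mulVec Bm v b, hBb, real_inner_self_eq_norm_mul_norm, hv]
      norm_num
    rw [real_inner_self_eq_norm_mul_norm] at h1
    nlinarith [norm_nonneg b]
  have hae : ⟪a, e₀⟫ = ⟪u, v⟫ := by
    conv_lhs => rw [ha']
    rw [← inner_mulVec A u e₀, hAe]
  have hbe : ⟪b, e₀⟫ = ⟪u, v⟫ := by
    conv_lhs => rw [hb']
    rw [← inner_mulVec Bm v e₀, hBe]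
    exact real_inner_comm u v
  obtain ⟨ρ, hρe, hρb⟩ := exists_rotation hn e₀ a b he₀ hna hnb (hae.trans hbe.symm)
  set R : Matrix (Fin n) (Fin n) ℝ := Matrix.of ρ.1 with hR
  have hRo := SOn_orth ρ
  have hRb : (WithLp.toLp 2 (Rᵀ *ᵥ a) : EuclideanSpace ℝ (Fin n)) = b := by
    have h1 : (WithLp.toLp 2 (R *ᵥ b) : EuclideanSpace ℝ (Fin n)) = a := hρb
    rw [← h1]
    show (WithLp.toLp 2 (Rᵀ *ᵥ (R *ᵥ b)) : EuclideanSpace ℝ (Fin n)) = b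
    rw [Matrix.mulVec_mulVec, hRo.2, Matrix.one_mulVec, WithLp.toLp_ofLp]
  have hmap := hzonal ρ hρe
  have hmeas : AEMeasurable (rot ρ) μ := (rot_measurable ρ).aemeasurable
  have hsm : AEStronglyMeasurable (fun w => |⟪a, w⟫|) (μ.map (rot ρ)) :=
    ((continuous_const.inner continuous_id).abs).aestronglyMeasurable
  calc ∫ w, |⟪u, rot θv w⟫| ∂μ
      = ∫ w, |⟪a, w⟫| ∂μ := by
        refine integral_congr_ae (Filter.Eventually.of_forall fun w => ?_)
        show |⟪u, rot θv w⟫| = |⟪a, w⟫|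
        rw [show rot θv w = (WithLp.toLp 2 (A *ᵥ w) : EuclideanSpace ℝ (Fin n)) from rfl, inner_mulVec]
    _ = ∫ w, |⟪a, w⟫| ∂(μ.map (rot ρ)) := by rw [hmap]
    _ = ∫ w, |⟪a, rot ρ w⟫| ∂μ := integral_map hmeas hsm
    _ = ∫ w, |⟪b, w⟫| ∂μ := by
        refine integral_congr_ae (Filter.Eventually.of_forall fun w => ?_)
        show |⟪a, rot ρ w⟫| = |⟪b, w⟫|
        rw [show rot ρ w = (WithLp.toLp 2 (R *ᵥ w) : EuclideanSpace ℝ (Fin n)) from rfl, inner_mulVec,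
          hRb]
    _ = ∫ w, |⟪v, rot θu w⟫| ∂μ := by
        refine integral_congr_ae (Filter.Eventually.of_forall fun w => ?_)
        show |⟪b, w⟫| = |⟪v, rot θu w⟫|
        rw [show rot θu w = (WithLp.toLp 2 (Bm *ᵥ w) : EuclideanSpace ℝ (Fin n)) from rfl, inner_mulVec]
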